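/- arXiv:1701.04470 — 4 statements merged into one kernel-verified Lean document; each statement's English description precedes it below -/
import Mathlib

section
/- For a uniformly random (n×m)-Toeplitz matrix T over F_q (with entries determined by a uniformly random vector s ∈ F_q^{n+m-1}) and any fixed nonzero vector x ∈ F_q^m, the random vector T x is uniformly distributed on F_q^n. -/
open Finset
open scoped ENNReal

/-- The `n × m` Toeplitz matrix over `F` determined by the vector
`s ∈ F^(n+m-1)` giving its first column (bottom to top: `T (n-1) 0 = s 0`, ..., `T 0 0 = s (n-1)`)
and first row (`T 0 j = s (n-1+j)`); it satisfies `T i j = T (i-1) (j-1)`. -/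
def toeplitz {F : Type*} (n m : ℕ) (s : Fin (n + m - 1) → F) :
    Matrix (Fin n) (Fin m) F :=
  fun i j => s ⟨n - 1 - i.1 + j.1, by have h1 := i.2; have h2 := j.2; omega⟩

/-- The linear map `s ↦ (toeplitz n m s).mulVec x`. -/
def tmap (F : Type*) [Field F] (n m : ℕ) (x : Fin m → F) :
    (Fin (n + m - 1) → F) →ₗ[F] (Fin n → F) where
  toFun s := (toeplitz n m s).mulVec x
  map_add' s t := by
    funext i
    simp [toeplitz, Matrix.mulVec, dotProduct, add_mul, Finset.sum_add_distrib]
  map_smul' c s := by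
    funext i
    simp [toeplitz, Matrix.mulVec, dotProduct, Finset.mul_sum, mul_assoc]

/-- The "extension" linear map putting `t i` at position `n - 1 + k - i`. -/
def emap (F : Type*) [Field F] (n m : ℕ) (hn : 0 < n) (k : Fin m) :
    (Fin n → F) →ₗ[F] (Fin (n + m - 1) → F) where
  toFun t a :=
    if h : (k : ℕ) ≤ (a : ℕ) ∧ (a : ℕ) ≤ n - 1 + (k : ℕ) then
      t ⟨n - 1 + (k : ℕ) - (a : ℕ), by omega⟩ else 0
  map_add' t t' := by funext a; split <;> rename_i h <;> simp [dif_pos, dif_neg, h]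
  map_smul' c t := by funext a; split <;> rename_i h <;> simp [dif_pos, dif_neg, h]

lemma emap_apply (F : Type*) [Field F] (n m : ℕ) (hn : 0 < n) (k : Fin m)
    (t : Fin n → F) (a : Fin (n + m - 1)) :
    emap F n m hn k t a =
      if h : (k : ℕ) ≤ (a : ℕ) ∧ (a : ℕ) ≤ n - 1 + (k : ℕ) then
        t ⟨n - 1 + (k : ℕ) - (a : ℕ), by omega⟩ else 0 := rfl

lemma tmap_apply (F : Type*) [Field F] (n m : ℕ) (x : Fin m → F)
    (s : Fin (n + m - 1) → F) :
    tmap F n m x s = (toeplitz n m s).mulVec x := rfl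

lemma tmap_surjective (F : Type*) [Field F] [Fintype F] [DecidableEq F] (n m : ℕ)
    (x : Fin m → F) (hx : x ≠ 0) :
    Function.Surjective (tmap F n m x) := by
  classical
  rcases Nat.eq_zero_or_pos n with hn | hn
  · subst hn
    intro y
    exact ⟨0, funext fun i => i.elim0⟩
  -- pick the largest index `k` with `x k ≠ 0`
  have hxS : (univ.filter fun j : Fin m => x j ≠ 0).Nonempty := by
    rcases Function.ne_iff.mp hx with ⟨j, hj⟩
    exact ⟨j, by simpa using hj⟩
  set S := univ.filter fun j : Fin m => x j ≠ 0 with hS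
  set k := S.max' hxS with hk
  have hxk : x k ≠ 0 := by
    have := S.max'_mem hxS
    simpa [hS] using this
  have hkmax : ∀ j : Fin m, (k : ℕ) < (j : ℕ) → x j = 0 := by
    intro j hj
    by_contra h
    have hjS : j ∈ S := by simp [hS, h]
    have := S.le_max' j hjS
    rw [Fin.le_def] at this
    omega
  -- the composite endomorphism is injective
  have hginj : Function.Injective ((tmap F n m x).comp (emap F n m hn k)) := by
    refine LinearMap.ker_eq_bot.mp (LinearMap.ker_eq_bot'.mpr ?_)
    intro t ht
    have key : ∀ c : ℕ, ∀ i : Fin n, n - 1 - (i : ℕ) = c → t i = 0 := by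
      intro c
      induction c using Nat.strong_induction_on with
      | _ c IH =>
        intro i hic
        have hup : ∀ i' : Fin n, (i : ℕ) < (i' : ℕ) → t i' = 0 := by
          intro i' hi'
          have h2 := i.2
          have h3 := i'.2
          exact IH (n - 1 - (i' : ℕ)) (by omega) i' rfl
        have hti : ∑ j : Fin m, (toeplitz n m (emap F n m hn k t)) i j * x j = 0 := by
          have := congrFun ht i
          simpa [LinearMap.comp_apply, tmap_apply, Matrix.mulVec, dotProduct]
            using this
        have hsingle : ∑ j : Fin m, (toeplitz n m (emap F n m hn k t)) i j * x j
            = (toeplitz n m (emap F n m hn k t)) i k * x k := by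
          refine Finset.sum_eq_single_of_mem k (mem_univ k) ?_
          intro j _ hjk
          rcases Nat.lt_or_ge (k : ℕ) (j : ℕ) with h | h
          · rw [hkmax j h, mul_zero]
          · have hjk' : (j : ℕ) < (k : ℕ) := by
              rcases Nat.lt_or_ge (j : ℕ) (k : ℕ) with h' | h'
              · exact h'
              · exact absurd (Fin.ext (le_antisymm h h')) hjk
            have hzero : (toeplitz n m (emap F n m hn k t)) i j = 0 := by
              show emap F n m hn k t _ = 0
              rw [emap_apply]
              simp only [Fin.val_mk]
              split
              · rename_i hcond
                have h2 := i.2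
                refine hup ⟨n - 1 + (k : ℕ) - (n - 1 - (i : ℕ) + (j : ℕ)), by omega⟩ ?_
                simp only [Fin.val_mk]
                omega
              · rfl
            rw [hzero, zero_mul]
        have hdiag : (toeplitz n m (emap F n m hn k t)) i k = t i := by
          show emap F n m hn k t _ = t i
          rw [emap_apply]
          simp only [Fin.val_mk]
          have h2 := i.2
          rw [dif_pos ⟨by omega, by omega⟩]
          congr 1
          exact Fin.ext (by simp only [Fin.val_mk]; omega)
        rw [hsingle, hdiag] at hti
        rcases mul_eq_zero.mp hti with h | h
        · exact h
        · exact absurd h hxk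
    funext i
    exact key (n - 1 - (i : ℕ)) i rfl
  have hg : Function.Surjective ((tmap F n m x).comp (emap F n m hn k)) :=
    LinearMap.injective_iff_surjective.mp hginj
  intro y
  obtain ⟨t, htt⟩ := hg y
  exact ⟨emap F n m hn k t, htt⟩

/-- For a uniformly random `(n × m)`-Toeplitz matrix `T` over `F` (determined by a uniformly
random `s ∈ F^(n+m-1)`) and any fixed nonzero `x ∈ F^m`, the vector `T x` is uniformly
distributed on `F^n`: for every `y`, the probability that `T x = y` is exactly
`1 / (Fintype.card F)^n`. -/
theorem stmt1 (F : Type*) [Field F] [Fintype F] [DecidableEq F] (n m : ℕ)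
    (x : Fin m → F) (hx : x ≠ 0) (y : Fin n → F) :
    (((Finset.univ.filter (fun s : Fin (n + m - 1) → F =>
        (toeplitz n m s).mulVec x = y)).card : ℝ) /
        (Fintype.card F : ℝ) ^ (n + m - 1))
      = 1 / (Fintype.card F : ℝ) ^ n := by
  classical
  have hm : 1 ≤ m := by
    rcases Nat.eq_zero_or_pos m with h | h
    · subst h; exact absurd (funext fun j => j.elim0) hx
    · exact h
  have hsurj := tmap_surjective F n m x hx
  obtain ⟨s0, hs0⟩ := hsurj y
  set L := tmap F n m x with hL
  -- the fiber is in bijection with the kernel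
  have hcard : (univ.filter fun s : Fin (n + m - 1) → F =>
      (toeplitz n m s).mulVec x = y).card = Fintype.card (LinearMap.ker L) := by
    rw [← Fintype.card_subtype]
    refine Fintype.card_congr ?_
    exact
      { toFun := fun sp => ⟨sp.1 - s0, by
          have hsp : L sp.1 = y := sp.2
          simp only [LinearMap.mem_ker, map_sub, hsp, hs0, sub_self]⟩
        invFun := fun v => ⟨s0 + v.1, by
          have hv : L v.1 = 0 := LinearMap.mem_ker.mp v.2
          show L (s0 + v.1) = y
          rw [map_add, hs0, hv, add_zero]⟩
        left_inv := fun sp => by ext1; simp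
        right_inv := fun v => by ext1; simp }
  have hker : Fintype.card (LinearMap.ker L) = Fintype.card F ^ (m - 1) := by
    have h2 := LinearMap.finrank_range_add_finrank_ker L
    rw [LinearMap.range_eq_top.mpr hsurj] at h2
    rw [finrank_top] at h2
    rw [Module.finrank_fintype_fun_eq_card, Module.finrank_fintype_fun_eq_card] at h2
    simp only [Fintype.card_fin] at h2
    have h3 : Module.finrank F (LinearMap.ker L) = m - 1 := by omega
    rw [Module.card_eq_pow_finrank (K := F), h3]
  rw [hcard, hker]
  have hq : (0 : ℝ) < (Fintype.card F : ℝ) := by exact_mod_cast Fintype.card_pos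
  have hqne : (Fintype.card F : ℝ) ≠ 0 := ne_of_gt hq
  push_cast
  rw [show n + m - 1 = n + (m - 1) by omega, pow_add]
  rw [div_eq_div_iff (by positivity) (by positivity)]
  ring
end

section
/- Perfect privacy preservation: Suppose the underlying secret sharing scheme (Sh, Rc) with access structure 𝔸 is perfectly private, i.e., for any non-qualified set A ∉ 𝔸, the joint distribution of shares (X_i)_{i∈A} is independent of the secret S. Then the transformed scheme of Protocol 1 is also perfectly private: for any non-qualified set A, the joint distribution of all data held by players in A — their original shares, masks, Toeplitz matrices, and tags — is independent of S. -/
open Finset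
open scoped ENNReal

/-! Masks are uniform, so a mask `Z_{j,i}` unknown to the coalition can be shifted by
`T_j (X_i - X'_i)` without changing the distribution; this turns the coalition's view of
shares `X` into its view of any shares `X'` agreeing with `X` on the coalition. Hence the view
depends on the shares only through `(X_j)_{j ∈ A}`, whose law does not depend on the secret. -/

theorem PMF.map_uniformOfFintype_equiv {α : Type*} [Fintype α] [Nonempty α] (e : α ≃ α) :
    (PMF.uniformOfFintype α).map e = PMF.uniformOfFintype α := by
  ext b
  rw [PMF.map_apply, tsum_eq_single (e.symm b) fun a ha => if_neg fun hb => ha (by simp [hb])]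
  simp

theorem PMF.bind_eq_bind_of_map_eq {α β γ : Type*} {p q : PMF α} {f : α → β} {κ : α → PMF γ}
    (hκ : κ.FactorsThrough f) (h : p.map f = q.map f) : p.bind κ = q.bind κ := by
  obtain ⟨x₀, -⟩ := p.support_nonempty
  rw [← hκ.extend_comp fun _ => κ x₀, ← PMF.bind_map, ← PMF.bind_map, h]

def Equiv.prodShearAdd {α β : Type*} [AddGroup α] (c : β → α) : α × β ≃ α × β where
  toFun p := (p.1 + c p.2, p.2)
  invFun p := (p.1 - c p.2, p.2)
  left_inv p := by simp
  right_inv p := by simp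

section Protocol

variable {F : Type*} [Ring F] {n m ℓ : ℕ}

/-- In `zk = (Z, K)`, `Z i j` is the mask `Z_{i,j}` and `K j` the Toeplitz key of player `j`. -/
def coalitionView (A : Finset (Fin n)) (X : Fin n → Fin m → F)
    (zk : (Fin n → Fin n → Fin ℓ → F) × (Fin n → Fin (ℓ + m - 1) → F)) :
    (j : A) → (Fin m → F) × (Fin n → Fin ℓ → F) × (Fin (ℓ + m - 1) → F) ×
      (Fin n → Fin ℓ → F) :=
  fun j => (X j.1, fun i => zk.1 i j.1, zk.2 j.1,
    fun i => (toeplitz ℓ m (zk.2 j.1)).mulVec (X i) + zk.1 j.1 i)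

theorem coalitionView_eq_comp_prodShearAdd {A : Finset (Fin n)} {X X' : Fin n → Fin m → F}
    (h : ∀ j ∈ A, X j = X' j) :
    coalitionView (ℓ := ℓ) A X = coalitionView A X' ∘
      Equiv.prodShearAdd fun K a b => (toeplitz ℓ m (K a)).mulVec (X b - X' b) := by
  funext zk j
  simp only [coalitionView, Function.comp_apply, Equiv.prodShearAdd, Equiv.coe_fn_mk,
    Pi.add_apply, h j j.2, sub_self, add_zero, Matrix.mulVec_sub, Prod.mk.injEq, true_and]
  funext i
  abel

theorem map_coalitionView_eq_of_eqOn [Fintype F] {A : Finset (Fin n)}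
    {X X' : Fin n → Fin m → F} (h : ∀ j ∈ A, X j = X' j) :
    (PMF.uniformOfFintype _).map (coalitionView (ℓ := ℓ) A X) =
      (PMF.uniformOfFintype _).map (coalitionView A X') := by
  rw [coalitionView_eq_comp_prodShearAdd h, ← PMF.map_comp, PMF.map_uniformOfFintype_equiv]

end Protocol

set_option synthInstance.maxHeartbeats 400000 in
/-- Perfect privacy preservation: if the underlying scheme `Sh` is perfectly private (for any
non-qualified set `A`, the joint distribution of the shares `(X_j)_{j ∈ A}` does not depend
on the secret), then the transformed scheme of Protocol 1 is perfectly private: for any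
non-qualified `A`, the joint distribution of all data held by players in `A` — original
shares `X_j`, masks `Z_{i,j}`, Toeplitz keys, and tags `Y_{j,i} = T_j X_i + Z_{j,i}` — does
not depend on the secret. -/
theorem stmt10 (F : Type*) [Field F] [Fintype F] (n m ℓ : ℕ)
    (Secret : Type*) (Sh : Secret → PMF (Fin n → Fin m → F))
    (Acc : Finset (Fin n) → Prop)
    (hpriv : ∀ A : Finset (Fin n), ¬ Acc A → ∀ s s' : Secret,
      (Sh s).map (fun X => fun j : A => X j.1) =
        (Sh s').map (fun X => fun j : A => X j.1)) :
    ∀ A : Finset (Fin n), ¬ Acc A → ∀ s s' : Secret,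
      ((Sh s).bind fun X =>
        (PMF.uniformOfFintype
            ((Fin n → Fin n → Fin ℓ → F) × (Fin n → Fin (ℓ + m - 1) → F))).map
          (fun zk => fun j : A =>
            (X j.1, fun i => zk.1 i j.1, zk.2 j.1,
              fun i => (toeplitz ℓ m (zk.2 j.1)).mulVec (X i) + zk.1 j.1 i)))
      = ((Sh s').bind fun X =>
        (PMF.uniformOfFintype
            ((Fin n → Fin n → Fin ℓ → F) × (Fin n → Fin (ℓ + m - 1) → F))).map
          (fun zk => fun j : A =>
            (X j.1, fun i => zk.1 i j.1, zk.2 j.1,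
              fun i => (toeplitz ℓ m (zk.2 j.1)).mulVec (X i) + zk.1 j.1 i))) := by
  intro A hA s s'
  refine PMF.bind_eq_bind_of_map_eq
    (κ := fun X => (PMF.uniformOfFintype _).map (coalitionView (ℓ := ℓ) A X))
    (fun X X' hXX' => ?_) (hpriv A hA s s')
  exact map_coalitionView_eq_of_eqOn fun j hj => congrFun hXX' ⟨j, hj⟩
end

section
/- Protocol 2 is a (⌈(n'-1)/2⌉, q^{-ℓ})-cheater-identifiable secret sharing scheme for agreed identification realizing access structure 𝔸, with share space F_q^{(2n-1)ℓ + 2m - 1}: if the number t of cheaters satisfies t < ⌈(n'-1)/2⌉ and the honest players form a qualified set, then all honest players agree on the identification of each forging cheater, each forging cheater is identified except with probability at most q^{-ℓ}, and the players agreeably reconstruct the true secret. -/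
open Finset
open scoped ENNReal
open scoped Classical

/-!
A forged first share component `x' ≠ x` passes an honest verifier's check with key `s` exactly
when `T(s) (x - x') = z' - z`, where `T(s)` is the `ℓ × m` Toeplitz matrix of `s`. For fixed
`v ≠ 0` the map `s ↦ T(s) v` is additive and onto `F^ℓ`: read from the bottom row up, the rows
form a linear recurrence in the key whose leading coefficient is the last nonzero entry of `v`,
so any right-hand side is met by choosing one key coordinate at a time. All fibres of a
surjective homomorphism have the same size, so a uniform key accepts the forgery with
probability exactly `q^{-ℓ}`.

If fewer than `⌈(n'-1)/2⌉` of the `n'` applicants cheat, the honest players alone reach this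
threshold and every list backed by that many voters is backed by an honest one. So when the
honest lists are correct the vote returns the true cheaters, the remaining players contain the
qualified set `H` and all hold correct shares, and reconstruction yields `S`.
-/

theorem AddMonoidHom.card_fiber_mul_card_of_surjective {α β : Type*} [AddGroup α] [Fintype α]
    [AddGroup β] [Fintype β] [DecidableEq β] (f : α →+ β) (hf : Function.Surjective f)
    (c : β) : #{a | f a = c} * Fintype.card β = Fintype.card α := calc
  #{a | f a = c} * Fintype.card β = ∑ b, #{a | f a = b} := by
    rw [sum_congr rfl fun b _ => AddMonoidHom.card_fiber_eq_of_mem_range f (hf b) (hf c),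
      sum_const, card_univ, smul_eq_mul, mul_comm]
  _ = Fintype.card α := (card_eq_sum_card_fiberwise fun a _ => mem_univ (f a)).symm

section Toeplitz

variable {F : Type*} [Field F] {ℓ m : ℕ}

theorem exists_forall_sum_mul_eq {v : Fin m → F} {d : Fin m} (hvd : v d ≠ 0)
    (hv : ∀ j, d < j → v j = 0) (y : ℕ → F) (N : ℕ) :
    ∃ s : ℕ → F, ∀ i < N, ∑ j : Fin m, s (i + j) * v j = y i := by
  induction N with
  | zero => exact ⟨0, fun i hi => absurd hi (Nat.not_lt_zero i)⟩
  | succ N ih =>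
    obtain ⟨s, hs⟩ := ih
    set c := (y N - ∑ j : Fin m, s (N + j) * v j) / v d
    -- the new coordinate `N + d` enters row `i < N` only through `v (N + d - i) = 0`
    refine ⟨s + Pi.single (N + d) c, fun i hi => ?_⟩
    simp only [Pi.add_apply, add_mul, sum_add_distrib, Pi.single_apply, ite_mul, zero_mul]
    rcases Nat.lt_succ_iff_lt_or_eq.mp hi with hi | rfl
    · rw [hs i hi, add_eq_left]
      refine sum_eq_zero fun j _ => ite_eq_right_iff.mpr fun h => ?_
      rw [hv j (Fin.lt_def.mpr (by omega)), mul_zero]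
    · simp only [Nat.add_left_cancel_iff, Fin.val_inj, sum_ite_eq', mem_univ, if_true]
      rw [div_mul_cancel₀ _ hvd, add_sub_cancel]

theorem toeplitz_add (s t : Fin (ℓ + m - 1) → F) :
    toeplitz ℓ m (s + t) = toeplitz ℓ m s + toeplitz ℓ m t := rfl

variable (ℓ) in
def toeplitzMulVecHom (v : Fin m → F) : (Fin (ℓ + m - 1) → F) →+ (Fin ℓ → F) :=
  AddMonoidHom.mk' (fun s => (toeplitz ℓ m s).mulVec v) fun s t => by
    rw [toeplitz_add, Matrix.add_mulVec]

@[simp]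
theorem toeplitzMulVecHom_apply (v : Fin m → F) (s : Fin (ℓ + m - 1) → F) :
    toeplitzMulVecHom ℓ v s = (toeplitz ℓ m s).mulVec v := rfl

theorem toeplitzMulVecHom_surjective {v : Fin m → F} (hv : v ≠ 0) :
    Function.Surjective (toeplitzMulVecHom ℓ v) := by
  intro y
  have hne : (univ.filter fun j => v j ≠ 0).Nonempty := by
    obtain ⟨j, hj⟩ := Function.ne_iff.mp hv
    exact ⟨j, by simpa using hj⟩
  set d := (univ.filter fun j => v j ≠ 0).max' hne
  have hvd : v d ≠ 0 := (mem_filter.mp (max'_mem _ hne)).2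
  have hv_gt : ∀ j, d < j → v j = 0 := fun j hj =>
    by_contra fun h => (le_max' _ j (by simpa using h)).not_gt hj
  -- row `r` of `toeplitz ℓ m s *ᵥ v` is the left side of the recurrence at `i = ℓ - 1 - r`
  obtain ⟨s, hs⟩ := exists_forall_sum_mul_eq hvd hv_gt
    (fun i => if h : i < ℓ then y ⟨ℓ - 1 - i, by omega⟩ else 0) ℓ
  refine ⟨fun k => s k, funext fun r => ?_⟩
  have hr := hs (ℓ - 1 - r) (by omega)
  rw [dif_pos (by omega)] at hr
  change ∑ j : Fin m, s (ℓ - 1 - r + j) * v j = y r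
  simpa [Nat.sub_sub_self (Nat.le_sub_one_of_lt r.2)] using hr

variable [Fintype F]

theorem card_filter_toeplitz_mulVec_eq_div {v : Fin m → F} (hv : v ≠ 0) (c : Fin ℓ → F) :
    (#{s | (toeplitz ℓ m s).mulVec v = c} : ℝ) / (Fintype.card F : ℝ) ^ (ℓ + m - 1)
      = 1 / (Fintype.card F : ℝ) ^ ℓ := by
  have hcard := (toeplitzMulVecHom ℓ v).card_fiber_mul_card_of_surjective
    (toeplitzMulVecHom_surjective hv) c
  simp only [toeplitzMulVecHom_apply, Fintype.card_fun, Fintype.card_fin] at hcard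
  have hq : (0 : ℝ) < Fintype.card F := by exact_mod_cast Fintype.card_pos
  rw [div_eq_div_iff (by positivity) (by positivity), one_mul]
  exact_mod_cast hcard

theorem card_filter_toeplitz_mulVec_add_eq_div {x x' : Fin m → F} (hx : x' ≠ x)
    (z z' : Fin ℓ → F) :
    (#{s | (toeplitz ℓ m s).mulVec x + z = (toeplitz ℓ m s).mulVec x' + z'} : ℝ) /
        (Fintype.card F : ℝ) ^ (ℓ + m - 1) = 1 / (Fintype.card F : ℝ) ^ ℓ := by
  rw [← card_filter_toeplitz_mulVec_eq_div (sub_ne_zero.mpr hx.symm) (z' - z)]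
  congr 4
  ext s
  rw [Matrix.mulVec_sub, sub_eq_sub_iff_add_eq_add, add_comm z']

end Toeplitz

theorem card_shareSpace (F : Type*) [Fintype F] {n : ℕ} (hn : 1 ≤ n) (m ℓ : ℕ) :
    Fintype.card ((Fin m → F) × (Fin (n - 1) → Fin ℓ → F) ×
        (Fin (ℓ + m - 1) → F) × (Fin (n - 1) → Fin ℓ → F))
      = Fintype.card F ^ ((2 * n - 1) * ℓ + 2 * m - 1) := by
  simp only [Fintype.card_prod, Fintype.card_fun, Fintype.card_fin, ← pow_mul, ← pow_add]
  congr 1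
  obtain ⟨k, rfl⟩ := Nat.exists_eq_add_of_le' hn
  obtain rfl | hℓ := Nat.eq_zero_or_pos ℓ
  · simp only [Nat.mul_zero, Nat.zero_mul, Nat.zero_add, Nat.add_zero]
    omega
  have h : (2 * (k + 1) - 1) * ℓ = 2 * (ℓ * k) + ℓ := by
    rw [show 2 * (k + 1) - 1 = 2 * k + 1 by omega]
    ring
  rw [h, Nat.add_sub_cancel]
  omega

theorem two_mul_ceil_sub_one_div_two_le (n : ℕ) : 2 * ⌈((n : ℚ) - 1) / 2⌉ ≤ n := by
  have h : ((2 * ⌈((n : ℚ) - 1) / 2⌉ : ℤ) : ℚ) < n + 1 := by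
    push_cast
    linarith [Int.ceil_lt_add_one (((n : ℚ) - 1) / 2)]
  have h' : 2 * ⌈((n : ℚ) - 1) / 2⌉ < n + 1 := by exact_mod_cast h
  omega

section Majority

variable {ι β : Type*} [DecidableEq ι] {P H : Finset ι} {c : ℤ}

theorem Finset.le_card_of_card_sdiff_lt (hHP : H ⊆ P) (hc : 2 * c ≤ #P)
    (hH : (#(P \ H) : ℤ) < c) : c ≤ #H := by
  have := card_sdiff_add_card_eq_card hHP
  omega

theorem Finset.eq_of_le_card_filter_eq [DecidableEq β] {L : ι → β} {C T : β} (hHP : H ⊆ P)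
    (hL : ∀ j ∈ H, L j = C) (hH : (#(P \ H) : ℤ) < c) (hT : c ≤ #{j ∈ P | L j = T}) :
    T = C := by
  have := card_sdiff_add_card_eq_card hHP
  obtain ⟨a, ha⟩ :=
    inter_nonempty_of_card_lt_card_add_card (filter_subset (fun j => L j = T) P) hHP (by omega)
  rw [← (mem_filter.mp (mem_inter.mp ha).1).2, hL a (mem_inter.mp ha).2]

end Majority

theorem stmt13_general (F : Type*) [Field F] [Fintype F] (n m ℓ : ℕ) (hn : 1 ≤ n)
    (Secret : Type*) (S : Secret)
    (Acc : Finset (Fin n) → Prop)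
    (hmono : ∀ Q Q' : Finset (Fin n), Q ⊆ Q' → Acc Q → Acc Q')
    (P H : Finset (Fin n)) (hHP : H ⊆ P) (hH : Acc H)
    (n' : ℕ) (hn' : n' = P.card)
    (hmaj : (((P \ H).card : ℤ)) < ⌈((n' : ℚ) - 1) / 2⌉)
    (x : Fin n → Fin m → F) (z : Fin n → Fin n → Fin ℓ → F)
    (sub : Fin n → (Fin m → F) × (Fin n → Fin ℓ → F))
    (hsub : ∀ i ∈ H, sub i = (x i, fun j => z j i))
    (Cstar : Finset (Fin n))
    (hCstar : Cstar = P.filter (fun i => sub i ≠ (x i, fun j => z j i)))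
    (Rc : Finset (Fin n) → (Fin n → Fin m → F) → Secret)
    (hRc : ∀ Q, Acc Q → ∀ g : Fin n → Fin m → F, (∀ i ∈ Q, g i = x i) → Rc Q g = S) :
    Fintype.card ((Fin m → F) × (Fin (n - 1) → Fin ℓ → F) ×
        (Fin (ℓ + m - 1) → F) × (Fin (n - 1) → Fin ℓ → F))
      = Fintype.card F ^ ((2 * n - 1) * ℓ + 2 * m - 1)
    ∧
    (∀ i ∈ P, (sub i).1 ≠ x i → ∀ j ∈ H,
      ((Finset.univ.filter (fun s : Fin (ℓ + m - 1) → F =>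
          (toeplitz ℓ m s).mulVec (x i) + z j i =
            (toeplitz ℓ m s).mulVec (sub i).1 + (sub i).2 j)).card : ℝ) /
        (Fintype.card F : ℝ) ^ (ℓ + m - 1) ≤ 1 / (Fintype.card F : ℝ) ^ ℓ)
    ∧
    (∀ k : Fin n → Fin (ℓ + m - 1) → F,
      letI L : Fin n → Finset (Fin n) := fun j =>
        P.filter (fun i => ¬ ((toeplitz ℓ m (k j)).mulVec (x i) + z j i =
          (toeplitz ℓ m (k j)).mulVec (sub i).1 + (sub i).2 j))
      (∀ j ∈ H, L j = Cstar) →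
        ((∀ T : Finset (Fin n),
            (⌈((n' : ℚ) - 1) / 2⌉ : ℤ) ≤ ((P.filter (fun j => L j = T)).card : ℤ) → T = Cstar)
          ∧ (⌈((n' : ℚ) - 1) / 2⌉ : ℤ) ≤ ((P.filter (fun j => L j = Cstar)).card : ℤ)
          ∧ Rc (P \ Cstar) (fun i => (sub i).1) = S)) := by
  refine ⟨card_shareSpace F hn m ℓ, fun i _ hforge j _ =>
    (card_filter_toeplitz_mulVec_add_eq_div hforge _ _).le, fun k hL => ?_⟩
  have hhonest : ∀ i ∈ P \ Cstar, sub i = (x i, fun j => z j i) := fun i hi => by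
    rw [hCstar, mem_sdiff, mem_filter, not_and, not_not] at hi
    exact hi.2 hi.1
  have hH_honest : H ⊆ P \ Cstar := fun i hi => by
    simp [hCstar, hHP hi, hsub i hi]
  have hH_card := le_card_of_card_sdiff_lt hHP (hn' ▸ two_mul_ceil_sub_one_div_two_le n') hmaj
  refine ⟨fun T => eq_of_le_card_filter_eq hHP hL hmaj, ?_, ?_⟩
  · exact hH_card.trans (mod_cast card_le_card fun j hj => mem_filter.mpr ⟨hHP hj, hL j hj⟩)
  · exact hRc _ (hmono H _ hH_honest hH) _ fun i hi => congrArg Prod.fst (hhonest i hi)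

/-- Protocol 2 is a `(⌈(n'-1)/2⌉, q^{-ℓ})`-CISS scheme for agreed identification realizing
access structure `Acc` with share space `F^((2n-1)ℓ + 2m - 1)`: when the number of cheaters
is less than `⌈(n'-1)/2⌉` and the honest players `H` form a qualified set, (i) the share
space has the stated size, (ii) each forging cheater escapes any honest player's individual
verification with probability at most `q^{-ℓ}`, and (iii) whenever all honest players'
individual lists equal the true set `Cstar` of forging cheaters, the majority vote agrees on
exactly `Cstar` and the players agreeably reconstruct the true secret `S`. -/
theorem stmt13 (F : Type*) [Field F] [Fintype F] (n m ℓ : ℕ) (hn : 1 ≤ n) (hm : 1 ≤ m)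
    (Secret : Type*) (S : Secret)
    (Acc : Finset (Fin n) → Prop)
    (hmono : ∀ Q Q' : Finset (Fin n), Q ⊆ Q' → Acc Q → Acc Q')
    (P H : Finset (Fin n)) (hHP : H ⊆ P) (hH : Acc H)
    (n' : ℕ) (hn' : n' = P.card)
    (hmaj : (((P \ H).card : ℤ)) < ⌈((n' : ℚ) - 1) / 2⌉)
    (x : Fin n → Fin m → F) (z : Fin n → Fin n → Fin ℓ → F)
    (sub : Fin n → (Fin m → F) × (Fin n → Fin ℓ → F))
    (hsub : ∀ i ∈ H, sub i = (x i, fun j => z j i))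
    (Cstar : Finset (Fin n))
    (hCstar : Cstar = P.filter (fun i => sub i ≠ (x i, fun j => z j i)))
    (Rc : Finset (Fin n) → (Fin n → Fin m → F) → Secret)
    (hRc : ∀ Q, Acc Q → ∀ g : Fin n → Fin m → F, (∀ i ∈ Q, g i = x i) → Rc Q g = S) :
    Fintype.card ((Fin m → F) × (Fin (n - 1) → Fin ℓ → F) ×
        (Fin (ℓ + m - 1) → F) × (Fin (n - 1) → Fin ℓ → F))
      = Fintype.card F ^ ((2 * n - 1) * ℓ + 2 * m - 1)
    ∧
    (∀ i ∈ P, (sub i).1 ≠ x i → ∀ j ∈ H,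
      ((Finset.univ.filter (fun s : Fin (ℓ + m - 1) → F =>
          (toeplitz ℓ m s).mulVec (x i) + z j i =
            (toeplitz ℓ m s).mulVec (sub i).1 + (sub i).2 j)).card : ℝ) /
        (Fintype.card F : ℝ) ^ (ℓ + m - 1) ≤ 1 / (Fintype.card F : ℝ) ^ ℓ)
    ∧
    (∀ k : Fin n → Fin (ℓ + m - 1) → F,
      letI L : Fin n → Finset (Fin n) := fun j =>
        P.filter (fun i => ¬ ((toeplitz ℓ m (k j)).mulVec (x i) + z j i =
          (toeplitz ℓ m (k j)).mulVec (sub i).1 + (sub i).2 j))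
      (∀ j ∈ H, L j = Cstar) →
        ((∀ T : Finset (Fin n),
            (⌈((n' : ℚ) - 1) / 2⌉ : ℤ) ≤ ((P.filter (fun j => L j = T)).card : ℤ) → T = Cstar)
          ∧ (⌈((n' : ℚ) - 1) / 2⌉ : ℤ) ≤ ((P.filter (fun j => L j = Cstar)).card : ℤ)
          ∧ Rc (P \ Cstar) (fun i => (sub i).1) = S)) :=
  stmt13_general F n m ℓ hn Secret S Acc hmono P H hHP hH n' hn' hmaj x z sub hsub Cstar hCstar Rc
    hRc
end

section
/- Under the cheating-majority attack on Protocol 2 (all applicants except j_0 collude and fabricate mutually consistent verification data while making their checks of j_0 fail), the honest player j_0's individual identification (Protocol 1) nevertheless remains correct: every cheater who submits a forged share X' ≠ X to j_0 fails j_0's verification except with probability at most q^{-ℓ}, and any cheater submitting the true share passes. -/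
open Finset
open scoped ENNReal

/-- Under the cheating-majority attack on Protocol 2, the honest player `j₀`'s individual
identification remains correct, since its verification key (a uniformly random hidden
Toeplitz matrix) was generated honestly by the dealer: any cheater submitting a forged share
`x' ≠ x` (with any mask `z'`) passes `j₀`'s verification with probability at most `q^{-ℓ}`,
and any player submitting the true `(x, z)` always passes. -/
theorem stmt16 (F : Type*) [Field F] [Fintype F] [DecidableEq F] (m ℓ : ℕ)
    (x : Fin m → F) (z : Fin ℓ → F) (x' : Fin m → F) (z' : Fin ℓ → F) :
    (x' ≠ x →
      ((Finset.univ.filter (fun s : Fin (ℓ + m - 1) → F =>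
          (toeplitz ℓ m s).mulVec x + z = (toeplitz ℓ m s).mulVec x' + z')).card : ℝ) /
        (Fintype.card F : ℝ) ^ (ℓ + m - 1) ≤ 1 / (Fintype.card F : ℝ) ^ ℓ)
    ∧ (x' = x → z' = z → ∀ s : Fin (ℓ + m - 1) → F,
        (toeplitz ℓ m s).mulVec x + z = (toeplitz ℓ m s).mulVec x' + z') := by
  constructor
  · intro hne
    obtain ⟨j0, hj0⟩ := Function.ne_iff.mp hne
    have hm : 1 ≤ m := by have := j0.2; omega
    set S : Finset (Fin (ℓ + m - 1) → F) :=
      Finset.univ.filter (fun s : Fin (ℓ + m - 1) → F =>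
          (toeplitz ℓ m s).mulVec x + z = (toeplitz ℓ m s).mulVec x' + z') with hS
    set v : Fin m → F := fun j => x j - x' j with hv
    have hKne : (Finset.univ.filter (fun j => v j ≠ 0)).Nonempty :=
      ⟨j0, by simp only [hv, Finset.mem_filter, Finset.mem_univ, true_and]; exact sub_ne_zero.mpr (fun h => hj0 h.symm)⟩
    set k : Fin m := (Finset.univ.filter (fun j => v j ≠ 0)).max' hKne with hk
    have hvk : v k ≠ 0 := by
      have := (Finset.univ.filter (fun j => v j ≠ 0)).max'_mem hKne
      simpa using this
    have hmax : ∀ j : Fin m, k < j → v j = 0 := by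
      intro j hj
      by_contra h
      exact absurd (Finset.le_max' _ j (by simpa using h)) (not_le.mpr hj)
    -- index map and pivot set
    set idx : Fin ℓ → Fin m → Fin (ℓ + m - 1) :=
      fun i j => ⟨ℓ - 1 - i.1 + j.1, by have := i.2; have := j.2; omega⟩ with hidx
    set P : Finset (Fin (ℓ + m - 1)) :=
      Finset.univ.image (fun i : Fin ℓ => idx i k) with hP
    have hPcard : P.card = ℓ := by
      rw [hP, Finset.card_image_of_injective _ ?inj, Finset.card_univ, Fintype.card_fin]
      case inj =>
        intro a b hab
        have := congrArg Fin.val hab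
        simp only [hidx] at this
        have ha := a.2; have hb := b.2
        exact Fin.ext (by omega)
    -- row equations
    have row : ∀ s ∈ S, ∀ i : Fin ℓ,
        (∑ j : Fin m, s (idx i j) * v j) = z' i - z i := by
      intro s hs i
      have h := (Finset.mem_filter.mp hs).2
      have h1 := congrFun h i
      simp only [Pi.add_apply, Matrix.mulVec, dotProduct, toeplitz] at h1
      have : (∑ j : Fin m, s (idx i j) * x j) + z i
          = (∑ j : Fin m, s (idx i j) * x' j) + z' i := h1
      calc (∑ j : Fin m, s (idx i j) * v j)
          = (∑ j : Fin m, s (idx i j) * x j) - (∑ j : Fin m, s (idx i j) * x' j) := by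
            simp [hv, mul_sub, Finset.sum_sub_distrib]
        _ = z' i - z i := by
            rw [sub_eq_sub_iff_add_eq_add]
            rw [this]; ring
    -- two elements of S agreeing off P are equal
    have key : ∀ s ∈ S, ∀ t ∈ S, (∀ e, e ∉ P → s e = t e) → s = t := by
      intro s hs t ht hout
      have diff : ∀ i : Fin ℓ, (∑ j : Fin m, (s (idx i j) - t (idx i j)) * v j) = 0 := by
        intro i
        have h1 := row s hs i
        have h2 := row t ht i
        calc (∑ j : Fin m, (s (idx i j) - t (idx i j)) * v j)
            = (∑ j : Fin m, s (idx i j) * v j) - (∑ j : Fin m, t (idx i j) * v j) := by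
              simp [sub_mul, Finset.sum_sub_distrib]
          _ = 0 := by rw [h1, h2, sub_self]
      suffices H : ∀ n : ℕ, ∀ e : Fin (ℓ + m - 1), e.1 = n → s e = t e by
        funext e; exact H e.1 e rfl
      intro n
      induction n using Nat.strong_induction_on with
      | _ n ih =>
        intro e he
        by_cases hPe : e ∈ P
        · obtain ⟨i, -, hi⟩ := Finset.mem_image.mp hPe
          have hsum := diff i
          have hsingle : (∑ j : Fin m, (s (idx i j) - t (idx i j)) * v j)
              = (s (idx i k) - t (idx i k)) * v k := by
            apply Finset.sum_eq_single_of_mem k (Finset.mem_univ k)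
            intro j _ hjk
            rcases lt_or_gt_of_ne hjk with hlt | hgt
            · -- j < k : index is smaller, use ih
              have hlt' : (idx i j).1 < n := by
                have : (idx i k).1 = n := by rw [hi, he]
                simp only [hidx] at this ⊢
                have := j.2; have hk2 := k.2; have hi2 := i.2
                omega
              have : s (idx i j) = t (idx i j) := ih _ hlt' _ rfl
              rw [this, sub_self, zero_mul]
            · rw [hmax j hgt, mul_zero]
          rw [hsingle] at hsum
          rcases mul_eq_zero.mp hsum with h | h
          · rw [hi] at h; exact sub_eq_zero.mp h
          · exact absurd h hvk
        · exact hout e hPe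
    -- injection into functions on the complement of P
    have hinj : ∀ s ∈ S, ∀ t ∈ S,
        (fun e : {e : Fin (ℓ + m - 1) // e ∉ P} => s e.1)
          = (fun e : {e : Fin (ℓ + m - 1) // e ∉ P} => t e.1) → s = t := by
      intro s hs t ht h
      exact key s hs t ht (fun e he => congrFun h ⟨e, he⟩)
    have hcard : S.card ≤ Fintype.card F ^ (m - 1) := by
      have h1 : S.card ≤ Fintype.card ({e : Fin (ℓ + m - 1) // e ∉ P} → F) := by
        rw [← Finset.card_univ]
        exact Finset.card_le_card_of_injOn
          (fun s => fun e : {e : Fin (ℓ + m - 1) // e ∉ P} => s e.1)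
          (fun s _ => Finset.mem_univ _)
          (fun s hs t ht h => hinj s hs t ht h)
      have h2 : Fintype.card {e : Fin (ℓ + m - 1) // e ∉ P} = m - 1 := by
        have := Fintype.card_subtype_compl (fun e : Fin (ℓ + m - 1) => e ∈ P)
        rw [this, Fintype.card_fin]
        have : Fintype.card {e : Fin (ℓ + m - 1) // e ∈ P} = P.card := Fintype.card_coe P
        rw [this, hPcard]
        omega
      calc S.card ≤ Fintype.card ({e : Fin (ℓ + m - 1) // e ∉ P} → F) := h1
        _ = Fintype.card F ^ (m - 1) := by rw [Fintype.card_fun, h2]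
    -- arithmetic
    have hq : (0 : ℝ) < (Fintype.card F : ℝ) := by
      exact_mod_cast Fintype.card_pos
    rw [div_le_div_iff₀ (by positivity) (by positivity)]
    have hcast : (S.card : ℝ) ≤ (Fintype.card F : ℝ) ^ (m - 1) := by
      exact_mod_cast hcard
    calc (S.card : ℝ) * (Fintype.card F : ℝ) ^ ℓ
        ≤ (Fintype.card F : ℝ) ^ (m - 1) * (Fintype.card F : ℝ) ^ ℓ := by
          exact mul_le_mul_of_nonneg_right hcast (by positivity)
      _ = (Fintype.card F : ℝ) ^ (ℓ + m - 1) := by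
          rw [← pow_add]; congr 1; omega
      _ = 1 * (Fintype.card F : ℝ) ^ (ℓ + m - 1) := by ring
  · intro h1 h2 s
    rw [h1, h2]
end
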